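/- arXiv:math/0502232 — 8 statements merged into one kernel-verified Lean document; each statement's English description precedes it below -/
import Mathlib

section
/- For every α ∈ [0,1], the sequence p_α^U defined by p_α^U(0) = 1 - α and p_α^U(k) = ∫₀^α (1 - α + t)(1 - e^{-t})^{k-1} dt for k ≥ 1 satisfies ∑_{k=0}^∞ p_α^U(k) = 1, i.e., it is a probability distribution on ℕ. -/
open Real MeasureTheory
open scoped Interval

/-!
Since `1 - e^{-t} ∈ [0, 1)` for `t ≥ 0`, the geometric series gives
`∑_{k ≥ 0} (1 - e^{-t})^k = e^t`. On `[0, α]` the terms are dominated by the geometric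
sequence `(1 - e^{-α})^k`, so summation and integration commute and
`∑_{k ≥ 1} p k = ∫₀^α (1 - α + t) e^t dt = [(t - α) e^t]₀^α = α`.
-/

lemma one_sub_exp_neg_nonneg {t : ℝ} (ht : 0 ≤ t) : 0 ≤ 1 - exp (-t) := by
  linarith [exp_le_one_iff.2 (neg_nonpos.2 ht)]

lemma one_sub_exp_neg_lt_one (t : ℝ) : 1 - exp (-t) < 1 := by
  linarith [exp_pos (-t)]

lemma one_sub_exp_neg_le_of_le {s t : ℝ} (hst : s ≤ t) : 1 - exp (-s) ≤ 1 - exp (-t) := by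
  linarith [exp_le_exp.2 (neg_le_neg hst)]

lemma hasSum_one_sub_exp_neg_pow {t : ℝ} (ht : 0 ≤ t) :
    HasSum (fun k : ℕ => (1 - exp (-t)) ^ k) (exp t) := by
  convert hasSum_geometric_of_lt_one (one_sub_exp_neg_nonneg ht) (one_sub_exp_neg_lt_one t)
    using 1
  rw [sub_sub_cancel, exp_neg, inv_inv]

theorem hasSum_integral_mul_one_sub_exp_neg_pow {g : ℝ → ℝ} {a : ℝ} (ha : 0 ≤ a)
    (hg : IntervalIntegrable g volume 0 a) :
    HasSum (fun k : ℕ => ∫ t in (0 : ℝ)..a, g t * (1 - exp (-t)) ^ k)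
      (∫ t in (0 : ℝ)..a, g t * exp t) := by
  set r := 1 - exp (-a)
  have hr_geom := hasSum_geometric_of_lt_one (one_sub_exp_neg_nonneg ha) (one_sub_exp_neg_lt_one a)
  have hmem : ∀ {t}, t ∈ Ι (0 : ℝ) a → 0 ≤ t ∧ t ≤ a := fun {t} ht => by
    rw [Set.uIoc_of_le ha] at ht
    exact ⟨ht.1.le, ht.2⟩
  refine intervalIntegral.hasSum_integral_of_dominated_convergence
    (fun k t => ‖g t‖ * r ^ k) (fun k => ?_) (fun k => ?_) ?_ ?_ ?_
  · exact hg.def'.aestronglyMeasurable.mul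
      ((continuous_const.sub (continuous_neg.rexp)).pow k).aestronglyMeasurable
  · refine Filter.Eventually.of_forall fun t ht => ?_
    obtain ⟨ht0, hta⟩ := hmem ht
    have hq := one_sub_exp_neg_nonneg ht0
    rw [norm_mul, norm_pow, Real.norm_of_nonneg hq]
    gcongr
    exact one_sub_exp_neg_le_of_le hta
  · exact Filter.Eventually.of_forall fun t _ => hr_geom.summable.mul_left _
  · simp only [tsum_mul_left]
    exact hg.norm.mul_const _
  · exact Filter.Eventually.of_forall fun t ht =>
      (hasSum_one_sub_exp_neg_pow (hmem ht).1).mul_left (g t)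

lemma integral_one_sub_add_mul_exp (a : ℝ) :
    ∫ t in (0 : ℝ)..a, (1 - a + t) * exp t = a := by
  have hderiv : ∀ x ∈ Set.uIcc (0 : ℝ) a,
      HasDerivAt (fun t => (t - a) * exp t) ((1 - a + x) * exp x) x := fun x _ =>
    (((hasDerivAt_id' x).sub_const a).mul (hasDerivAt_exp x)).congr_deriv (by ring)
  rw [intervalIntegral.integral_eq_sub_of_hasDerivAt hderiv
    (by apply Continuous.intervalIntegrable; fun_prop)]
  simp

/-- The limiting distribution `p_α^U` of the number of occupied cells encountered
in a random unsuccessful search sums to 1, i.e. it is a probability distribution on ℕ. -/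
theorem stmt_0 (α : ℝ) (hα : α ∈ Set.Icc (0:ℝ) 1) (p : ℕ → ℝ)
    (h0 : p 0 = 1 - α)
    (hk : ∀ k : ℕ, 1 ≤ k →
      p k = ∫ t in (0:ℝ)..α, (1 - α + t) * (1 - Real.exp (-t)) ^ (k - 1)) :
    ∑' k : ℕ, p k = 1 := by
  have htail : HasSum (fun k => p (k + 1)) α := by
    have := hasSum_integral_mul_one_sub_exp_neg_pow (g := fun t => 1 - α + t) hα.1
      (by apply Continuous.intervalIntegrable; fun_prop)
    rw [integral_one_sub_add_mul_exp] at this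
    convert this using 2 with k
    simpa using hk (k + 1) k.succ_pos
  have hp : HasSum p (α + p 0) := by simpa using (hasSum_nat_add_iff 1).1 htail
  rw [hp.tsum_eq, h0]
  ring
end

section
/- Let α ∈ [0,1]. If D is a random variable on ℕ with P(D = 0) = 1 - α and P(D = k) = ∫₀^α (1 - α + t)(1 - e^{-t})^{k-1} dt for k ≥ 1, then E[D] = (e^{2α} - 1)/4 + α/2. -/
open Real MeasureTheory

/-! Write `E[D] = ∑ₙ (n + 1) P(D = n + 1)`. On `[0, α]` the `n`-th integrand
`(n + 1)(1 - α + t)(1 - e^{-t})^n` is dominated by `(n + 1)(1 - e^{-α})^n`, which is summable, so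
sum and integral may be exchanged; since `∑ₙ (n + 1) xⁿ = (1 - x)⁻²`, the integrand sums to
`(1 - α + t) e^{2t}`, whose integral over `[0, α]` is `(e^{2α} - 1)/4 + α/2`. -/

theorem hasSum_succ_mul_geometric {𝕜 : Type*} [NormedField 𝕜] [CompleteSpace 𝕜] {r : 𝕜}
    (hr : ‖r‖ < 1) : HasSum (fun n : ℕ ↦ ((n : 𝕜) + 1) * r ^ n) (1 / (1 - r) ^ 2) := by
  simpa using hasSum_choose_mul_geometric_of_norm_lt_one 1 hr

theorem integral_eq_of_hasSum_of_nonneg {X : Type*} [MeasurableSpace X] [Countable X]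
    [MeasurableSingletonClass X] {μ : Measure X} [IsFiniteMeasure μ] {f : X → ℝ} {s : ℝ}
    (hf : 0 ≤ f) (h : HasSum (fun x ↦ μ.real {x} * f x) s) : ∫ x, f x ∂μ = s := by
  have hnorm : Summable fun x ↦ (μ {x}).toReal * ‖f x‖ := by
    simpa [Real.norm_of_nonneg (hf _), measureReal_def] using h.summable
  rw [← Measure.sum_smul_dirac μ]
  exact (hasSum_integral_sum_dirac (fun _ ↦ measure_ne_top μ _) hnorm).unique h

theorem norm_one_sub_exp_neg_lt_one {t : ℝ} (ht : 0 ≤ t) : ‖1 - exp (-t)‖ < 1 := by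
  rw [Real.norm_of_nonneg (by simpa using ht)]
  linarith [exp_pos (-t)]

theorem hasSum_succ_mul_one_sub_exp_neg_pow (c : ℝ) {t : ℝ} (ht : 0 ≤ t) :
    HasSum (fun n : ℕ ↦ ((n : ℝ) + 1) * (c * (1 - exp (-t)) ^ n)) (c * exp (2 * t)) := by
  have hsum := (hasSum_succ_mul_geometric (norm_one_sub_exp_neg_lt_one ht)).mul_left c
  rw [sub_sub_cancel, one_div, ← exp_nat_mul, ← exp_neg, Nat.cast_ofNat, mul_neg, neg_neg]
    at hsum
  refine hsum.congr_fun fun n ↦ ?_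
  ring

theorem norm_succ_mul_one_sub_add_mul_pow_le {α t : ℝ} (hα : α ≤ 1) (ht : t ∈ Set.Icc 0 α)
    (n : ℕ) : ‖((n : ℝ) + 1) * ((1 - α + t) * (1 - exp (-t)) ^ n)‖
      ≤ ((n : ℝ) + 1) * (1 - exp (-α)) ^ n := by
  obtain ⟨ht0, htα⟩ := ht
  have hq0 : 0 ≤ 1 - exp (-t) := by simpa using ht0
  have hqα : 1 - exp (-t) ≤ 1 - exp (-α) := by gcongr
  rw [norm_mul, norm_mul, norm_pow, Real.norm_of_nonneg (by positivity),
    Real.norm_of_nonneg (by linarith), Real.norm_of_nonneg hq0]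
  gcongr
  calc (1 - α + t) * (1 - exp (-t)) ^ n ≤ 1 * (1 - exp (-α)) ^ n := by
        gcongr
        linarith
    _ = (1 - exp (-α)) ^ n := one_mul _

theorem hasSum_intervalIntegral_succ_mul_one_sub_add_mul_pow {α : ℝ} (hα : α ∈ Set.Icc 0 1) :
    HasSum (fun n : ℕ ↦ ∫ t in (0 : ℝ)..α, ((n : ℝ) + 1) * ((1 - α + t) * (1 - exp (-t)) ^ n))
      (∫ t in (0 : ℝ)..α, (1 - α + t) * exp (2 * t)) := by
  have hΙ : ∀ t ∈ Set.uIoc 0 α, t ∈ Set.Icc 0 α := fun t ht ↦ by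
    rw [Set.uIoc_of_le hα.1] at ht
    exact Set.Ioc_subset_Icc_self ht
  have hmeas (n : ℕ) : AEStronglyMeasurable
      (fun t : ℝ ↦ ((n : ℝ) + 1) * ((1 - α + t) * (1 - exp (-t)) ^ n))
      (volume.restrict (Set.uIoc 0 α)) :=
    (by fun_prop : Continuous _).aestronglyMeasurable
  have hbound_summable : Summable fun n : ℕ ↦ ((n : ℝ) + 1) * (1 - exp (-α)) ^ n :=
    (hasSum_succ_mul_geometric (norm_one_sub_exp_neg_lt_one hα.1)).summable
  exact intervalIntegral.hasSum_integral_of_dominated_convergence _ hmeas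
    (fun n ↦ .of_forall fun t ht ↦ norm_succ_mul_one_sub_add_mul_pow_le hα.2 (hΙ t ht) n)
    (.of_forall fun _ _ ↦ hbound_summable) intervalIntegrable_const
    (.of_forall fun t ht ↦ hasSum_succ_mul_one_sub_exp_neg_pow _ (hΙ t ht).1)

theorem integral_const_add_mul_exp_two_mul (c α : ℝ) :
    ∫ t in (0 : ℝ)..α, (c + t) * exp (2 * t)
      = ((2 * (c + α) - 1) * exp (2 * α) - (2 * c - 1)) / 4 := by
  have hderiv : ∀ t : ℝ, HasDerivAt (fun t ↦ (2 * (c + t) - 1) * exp (2 * t) / 4)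
      ((c + t) * exp (2 * t)) t := fun t ↦ by
    have h := (((hasDerivAt_id t).const_add c).const_mul 2 |>.sub_const 1).mul
      (((hasDerivAt_id t).const_mul 2).exp) |>.div_const 4
    exact h.congr_deriv (by simp only [id]; ring)
  rw [intervalIntegral.integral_eq_sub_of_hasDerivAt (fun t _ ↦ hderiv t)
    ((by fun_prop : Continuous fun t : ℝ ↦ (c + t) * exp (2 * t)).intervalIntegrable _ _)]
  simp only [add_zero, mul_zero, exp_zero, mul_one]
  ring

theorem stmt_3_general (α : ℝ) (hα : α ∈ Set.Icc (0:ℝ) 1)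
    (μ : Measure ℕ) [IsProbabilityMeasure μ]
    (hk : ∀ k : ℕ, 1 ≤ k →
      (μ {k}).toReal = ∫ t in (0:ℝ)..α, (1 - α + t) * (1 - Real.exp (-t)) ^ (k - 1)) :
    ∫ k, (k : ℝ) ∂μ = (Real.exp (2 * α) - 1) / 4 + α / 2 := by
  have hshift : HasSum (fun n : ℕ ↦ μ.real {n + 1} * ((n + 1 : ℕ) : ℝ))
      ((Real.exp (2 * α) - 1) / 4 + α / 2) := by
    have h := hasSum_intervalIntegral_succ_mul_one_sub_add_mul_pow hα
    rw [integral_const_add_mul_exp_two_mul] at h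
    convert h using 1
    · ext n
      rw [intervalIntegral.integral_const_mul, measureReal_def, hk (n + 1) n.succ_pos,
        Nat.add_sub_cancel, Nat.cast_succ, mul_comm]
    · ring
  refine integral_eq_of_hasSum_of_nonneg (fun k ↦ Nat.cast_nonneg k) ?_
  exact (hasSum_nat_add_iff' 1).mp (by simpa using hshift)

/-- The mean of the limiting distribution `D_α^U` of the number of occupied cells
encountered in a random unsuccessful search: `E[D] = (e^{2α}-1)/4 + α/2`. -/
theorem stmt_3 (α : ℝ) (hα : α ∈ Set.Icc (0:ℝ) 1)
    (μ : Measure ℕ) [IsProbabilityMeasure μ]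
    (h0 : (μ {0}).toReal = 1 - α)
    (hk : ∀ k : ℕ, 1 ≤ k →
      (μ {k}).toReal = ∫ t in (0:ℝ)..α, (1 - α + t) * (1 - Real.exp (-t)) ^ (k - 1)) :
    ∫ k, (k : ℝ) ∂μ = (Real.exp (2 * α) - 1) / 4 + α / 2 :=
  stmt_3_general α hα μ hk
end

section
/- Let α ∈ (0,1]. If D is a random variable on ℕ with P(D = 0) = 1 - α/2 and P(D = k) = α⁻¹ ∫₀^α (α - t) e^{-t} (1 - e^{-t})^{k-1} dt for k ≥ 1, then E[D] = (e^α - 1 - α)/α. -/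
open Real MeasureTheory intervalIntegral

/-!
Integrating by parts (the boundary terms vanish thanks to the factors `α - t` and `1 - e^{-t}`)
gives `k P(D = k) = α⁻¹ ∫₀^α (1 - e^{-t})^k dt` for `k ≥ 1`. Summing over `k` under the integral,
by dominated convergence, the geometric series `∑_{k ≥ 1} (1 - e^{-t})^k = e^t - 1` leaves
`E[D] = α⁻¹ ∫₀^α (e^t - 1) dt = (e^α - 1 - α)/α`.
-/
theorem integral_sub_mul_exp_neg_mul_one_sub_exp_neg_pow (a : ℝ) (k : ℕ) :
    ∫ t in (0:ℝ)..a, (a - t) * exp (-t) * (1 - exp (-t)) ^ k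
      = (∫ t in (0:ℝ)..a, (1 - exp (-t)) ^ (k + 1)) / (k + 1) := by
  have hk : (k + 1 : ℝ) ≠ 0 := by positivity
  set F : ℝ → ℝ := fun t => (a - t) * (1 - exp (-t)) ^ (k + 1) / (k + 1)
  have hF : ∀ t, HasDerivAt F
      ((a - t) * exp (-t) * (1 - exp (-t)) ^ k - (1 - exp (-t)) ^ (k + 1) / (k + 1)) t := by
    intro t
    have hx : HasDerivAt (fun t => 1 - exp (-t)) (exp (-t)) t := by
      simpa using ((hasDerivAt_neg t).exp).const_sub 1
    have hpow : HasDerivAt (fun t => (1 - exp (-t)) ^ (k + 1))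
        ((k + 1 : ℕ) * (1 - exp (-t)) ^ k * exp (-t)) t := hx.pow (k + 1)
    have hlin : HasDerivAt (fun t => a - t) (-1) t := by
      simpa using (hasDerivAt_id t).const_sub a
    refine ((hlin.mul hpow).div_const (k + 1 : ℝ)).congr_deriv ?_
    push_cast
    field_simp
    ring
  have hFTC := integral_eq_sub_of_hasDerivAt (fun t _ => hF t)
    (Continuous.intervalIntegrable (by fun_prop) 0 a)
  rw [integral_sub (Continuous.intervalIntegrable (by fun_prop) 0 a)
    (Continuous.intervalIntegrable (by fun_prop) 0 a), intervalIntegral.integral_div] at hFTC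
  simp only [F, sub_self, neg_zero, exp_zero, zero_mul, zero_div, zero_pow k.succ_ne_zero,
    mul_zero, sub_zero] at hFTC
  linarith

theorem hasSum_one_sub_exp_neg_pow_succ {t : ℝ} (ht : 0 ≤ t) :
    HasSum (fun n : ℕ => (1 - exp (-t)) ^ (n + 1)) (exp t - 1) := by
  have hr : 0 ≤ 1 - exp (-t) := by simp [exp_le_one_iff, ht]
  have hgeom := (hasSum_geometric_of_lt_one hr (by linarith [exp_pos (-t)])).mul_left
    (1 - exp (-t))
  have hlimit : (1 - exp (-t)) * (1 - (1 - exp (-t)))⁻¹ = exp t - 1 := by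
    rw [sub_sub_cancel, ← exp_neg, neg_neg, sub_mul, one_mul, ← exp_add, neg_add_cancel, exp_zero]
  simpa only [← pow_succ', hlimit] using hgeom

theorem hasSum_integral_one_sub_exp_neg_pow_succ {a : ℝ} (ha : 0 ≤ a) :
    HasSum (fun n : ℕ => ∫ t in (0:ℝ)..a, (1 - exp (-t)) ^ (n + 1)) (exp a - 1 - a) := by
  have hpos : ∀ t ∈ Set.uIoc 0 a, 0 ≤ t := fun t ht =>
    ((Set.uIoc_of_le ha ▸ ht) : t ∈ Set.Ioc 0 a).1.le
  have hlim : ∀ t ∈ Set.uIoc 0 a,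
      HasSum (fun n : ℕ => (1 - exp (-t)) ^ (n + 1)) (exp t - 1) := fun t ht =>
    hasSum_one_sub_exp_neg_pow_succ (hpos t ht)
  have hI : ∫ t in (0:ℝ)..a, (exp t - 1) = exp a - 1 - a := by
    rw [integral_sub (continuous_exp.intervalIntegrable 0 a) intervalIntegrable_const,
      integral_exp, intervalIntegral.integral_const]
    simp
  rw [← hI]
  refine hasSum_integral_of_dominated_convergence (fun n t => (1 - exp (-t)) ^ (n + 1))
    (fun n => Continuous.aestronglyMeasurable (by fun_prop)) (fun n => ?_)
    (.of_forall fun t ht => (hlim t ht).summable) ?_ (.of_forall hlim)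
  · exact .of_forall fun t ht =>
      (norm_of_nonneg (pow_nonneg (by simpa [exp_le_one_iff] using hpos t ht) _)).le
  · refine (Continuous.intervalIntegrable (by fun_prop : Continuous fun t => exp t - 1) 0 a).congr
      fun t ht => (hlim t ht).tsum_eq.symm

theorem integral_eq_of_hasSum_measureReal_singleton_mul {X : Type*} [MeasurableSpace X]
    [Countable X] [MeasurableSingletonClass X] {μ : Measure X} [IsFiniteMeasure μ]
    {f : X → ℝ} (hf : 0 ≤ f) {s : ℝ} (h : HasSum (fun x => μ.real {x} * f x) s) :
    ∫ x, f x ∂μ = s := by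
  rw [← Measure.sum_smul_dirac μ]
  refine (hasSum_integral_sum_dirac (x := id) (fun x => measure_ne_top μ {x}) ?_).unique h
  simpa [Real.norm_of_nonneg (hf _), measureReal_def] using h.summable

theorem stmt_5_general (α : ℝ) (hα : α ∈ Set.Ioc (0:ℝ) 1)
    (μ : Measure ℕ) [IsProbabilityMeasure μ]
    (hk : ∀ k : ℕ, 1 ≤ k →
      (μ {k}).toReal = α⁻¹ * ∫ t in (0:ℝ)..α,
        (α - t) * Real.exp (-t) * (1 - Real.exp (-t)) ^ (k - 1)) :
    ∫ k, (k : ℝ) ∂μ = (Real.exp α - 1 - α) / α := by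
  have hterm : ∀ k : ℕ, μ.real {k + 1} * (k + 1)
      = α⁻¹ * ∫ t in (0:ℝ)..α, (1 - exp (-t)) ^ (k + 1) := by
    intro k
    rw [measureReal_def, hk (k + 1) k.succ_pos, Nat.add_sub_cancel,
      integral_sub_mul_exp_neg_mul_one_sub_exp_neg_pow]
    field_simp
  have hsum : HasSum (fun k : ℕ => μ.real {k} * k) (α⁻¹ * (exp α - 1 - α)) := by
    rw [← hasSum_nat_add_iff' 1]
    simpa [hterm] using (hasSum_integral_one_sub_exp_neg_pow_succ hα.1.le).mul_left α⁻¹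
  rw [integral_eq_of_hasSum_measureReal_singleton_mul (fun k => k.cast_nonneg) hsum,
    inv_mul_eq_div]

/-- The mean of the limiting displacement `D_α^E` for early-insertion coalesced
hashing: `E[D] = (e^α - 1 - α)/α`. -/
theorem stmt_5 (α : ℝ) (hα : α ∈ Set.Ioc (0:ℝ) 1)
    (μ : Measure ℕ) [IsProbabilityMeasure μ]
    (h0 : (μ {0}).toReal = 1 - α / 2)
    (hk : ∀ k : ℕ, 1 ≤ k →
      (μ {k}).toReal = α⁻¹ * ∫ t in (0:ℝ)..α,
        (α - t) * Real.exp (-t) * (1 - Real.exp (-t)) ^ (k - 1)) :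
    ∫ k, (k : ℝ) ∂μ = (Real.exp α - 1 - α) / α :=
  stmt_5_general α hα μ hk
end

section
/- Fix α > 0. As k → ∞, p_α^U(k) ~ e^α k⁻¹ (1 - e^{-α})^k, where p_α^U(k) = ∫₀^α (1 - α + t)(1 - e^{-t})^{k-1} dt. -/
/-! With `φ t = 1 - e^{-t}`, the integrand of `p_α^U(k+1)` is `(1 - α + t) φ(t)^k`, while
`φ(α)^{k+1} / (k+1) = ∫₀^α e^{-t} φ(t)^k dt`. Since `φ` is strictly increasing, the weights
`φ^k` concentrate at `t = α` (Laplace's method), so the ratio of the two integrals tends to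
`(1 - α + α) / e^{-α} = e^α`. -/

open Real Filter Topology MeasureTheory Set

theorem tendsto_setIntegral_mul_pow_div_setIntegral_mul_pow {X : Type*} [TopologicalSpace X]
    [TopologicalSpace.MetrizableSpace X] [MeasurableSpace X] [BorelSpace X] {μ : Measure X}
    [IsLocallyFiniteMeasure μ] [μ.IsOpenPosMeasure] {s : Set X} {x₀ : X} {c f g : X → ℝ}
    (hs : IsCompact s) (hc : ContinuousOn c s) (h'c : ∀ y ∈ s, y ≠ x₀ → c y < c x₀)
    (hnc : ∀ x ∈ s, 0 ≤ c x) (hnc₀ : 0 < c x₀) (h₀ : x₀ ∈ closure (interior s))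
    (hf : ContinuousOn f s) (hg : ContinuousOn g s) (hgx₀ : g x₀ ≠ 0) :
    Tendsto (fun n : ℕ => (∫ x in s, f x * c x ^ n ∂μ) / ∫ x in s, g x * c x ^ n ∂μ)
      atTop (𝓝 (f x₀ / g x₀)) := by
  have peak {h : X → ℝ} (hh : ContinuousOn h s) :=
    tendsto_setIntegral_pow_smul_of_unique_maximum_of_isCompact_of_continuousOn (μ := μ)
      hs hc h'c hnc hnc₀ h₀ hh
  have hG := peak hg
  refine ((peak hf).div hG hgx₀).congr' ?_
  filter_upwards [hG.eventually_ne hgx₀] with n hn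
  simp only [Pi.div_apply, smul_eq_mul, mul_comm (c _ ^ n)] at hn ⊢
  exact mul_div_mul_left _ _ (left_ne_zero_of_mul hn)

theorem integral_exp_neg_mul_one_sub_exp_neg_pow (a b : ℝ) (n : ℕ) :
    ∫ t in a..b, exp (-t) * (1 - exp (-t)) ^ n
      = ((1 - exp (-b)) ^ (n + 1) - (1 - exp (-a)) ^ (n + 1)) / (n + 1) := by
  have hφ (t : ℝ) : HasDerivAt (fun t => 1 - exp (-t)) (exp (-t)) t := by
    simpa using ((hasDerivAt_neg t).exp).const_sub 1
  rw [← integral_pow, ← intervalIntegral.integral_comp_mul_deriv (fun t _ => hφ t)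
    (by fun_prop) (continuous_pow n)]
  simp only [Function.comp_def, mul_comm]

/-- Asymptotics of `p_α^U`: as `k → ∞`, `p_α^U(k) ~ e^α k⁻¹ (1-e^{-α})^k`. -/
theorem stmt_12 (α : ℝ) (hα : 0 < α) (p : ℕ → ℝ)
    (hk : ∀ k : ℕ, 1 ≤ k →
      p k = ∫ t in (0:ℝ)..α, (1 - α + t) * (1 - Real.exp (-t)) ^ (k - 1)) :
    Tendsto (fun k : ℕ =>
        p k / (Real.exp α * (k : ℝ)⁻¹ * (1 - Real.exp (-α)) ^ k))
      atTop (nhds 1) := by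
  have hφ_strictMono : StrictMono fun t : ℝ => 1 - exp (-t) := fun x y hxy => by
    simpa using exp_lt_exp.2 (neg_lt_neg hxy)
  have ratio : Tendsto (fun n : ℕ => (∫ t in (0:ℝ)..α, (1 - α + t) * (1 - exp (-t)) ^ n) /
      ∫ t in (0:ℝ)..α, exp (-t) * (1 - exp (-t)) ^ n) atTop (𝓝 (exp α)) := by
    simp only [intervalIntegral.integral_of_le hα.le, ← integral_Icc_eq_integral_Ioc]
    convert tendsto_setIntegral_mul_pow_div_setIntegral_mul_pow (μ := volume)
      (f := fun t => 1 - α + t) (g := fun t => exp (-t)) isCompact_Icc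
      (by fun_prop) (fun y hy hyα => hφ_strictMono (lt_of_le_of_ne hy.2 hyα))
      (fun x hx => by simpa using hx.1) (by simpa using hα)
      (by rw [interior_Icc, closure_Ioo hα.ne]; exact right_mem_Icc.2 hα.le)
      (by fun_prop) (by fun_prop) (exp_pos _).ne' using 2
    simp [exp_neg]
  rw [← tendsto_add_atTop_iff_nat 1]
  have := ratio.div_const (exp α)
  rw [div_self (exp_pos α).ne'] at this
  refine this.congr fun n => ?_
  rw [hk (n + 1) (by omega), Nat.add_sub_cancel, integral_exp_neg_mul_one_sub_exp_neg_pow]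
  simp
  field_simp
end

section
/- Fix α > 0. As k → ∞, p_α^E(k) ~ α⁻¹ (e^α - 1) k⁻² (1 - e^{-α})^k, where p_α^E(k) = α⁻¹ ∫₀^α (α - t) e^{-t} (1 - e^{-t})^{k-1} dt. -/
/-!
Integrating by parts, `p k = (α k)⁻¹ ∫₀^α g(t)^k dt` with `g t = 1 - e^{-t}`, and this integral
concentrates at the endpoint `α`, where `g` is largest. After the substitution `t = α - s / k`,
`(g (α - s / k) / g α) ^ k → exp (-(g' α / g α) * s)`, and since the concave `g` lies below its
tangent at `α`, the same exponential dominates for every `k`. Dominated convergence gives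
`k ∫₀^α (g t / g α)^k dt → g α / g' α = e^α - 1`.
-/

open Real Filter MeasureTheory Set Topology

theorem HasDerivAt.tendsto_nat_mul_sub_div {f : ℝ → ℝ} {f' x : ℝ} (hf : HasDerivAt f f' x)
    (s : ℝ) :
    Tendsto (fun k : ℕ => k * (f (x - s / k) - f x)) atTop (𝓝 (-(s * f'))) := by
  rcases eq_or_ne s 0 with rfl | hs
  · simp
  have hh : Tendsto (fun k : ℕ => -s / k) atTop (𝓝[≠] 0) :=
    tendsto_nhdsWithin_of_tendsto_nhds_of_eventually_within _
      (tendsto_const_div_atTop_nhds_zero_nat _)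
      (eventually_ge_atTop 1 |>.mono fun k hk =>
        div_ne_zero (neg_ne_zero.2 hs) (Nat.cast_ne_zero.2 (by omega)))
  rw [← neg_mul]
  refine (((hasDerivAt_iff_tendsto_slope_zero.1 hf).comp hh).const_mul (-s)).congr' ?_
  filter_upwards [eventually_ge_atTop 1] with k hk
  have hk : (k : ℝ) ≠ 0 := Nat.cast_ne_zero.2 (by omega)
  simp only [Function.comp_apply, smul_eq_mul, ← sub_eq_add_neg, neg_div]
  field_simp

theorem HasDerivAt.tendsto_div_pow_nat {g : ℝ → ℝ} {g' x : ℝ} (hg : HasDerivAt g g' x)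
    (hgx : g x ≠ 0) (s : ℝ) :
    Tendsto (fun k : ℕ => (g (x - s / k) / g x) ^ k) atTop (𝓝 (Real.exp (-(g' / g x) * s))) := by
  have hlim := (hg.tendsto_nat_mul_sub_div s).div_const (g x)
  rw [show -(s * g') / g x = -(g' / g x) * s by ring] at hlim
  simp only [mul_div_assoc] at hlim
  refine (Real.tendsto_one_add_pow_exp_of_tendsto hlim).congr fun k => ?_
  rw [one_add_div hgx, add_sub_cancel]

theorem mul_integral_eq_integral_indicator_comp_sub_div (f : ℝ → ℝ) {a b c : ℝ} (hba : b ≤ a)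
    (hc : 0 < c) :
    c * ∫ t in b..a, f t = ∫ s, (Ioc 0 (c * (a - b))).indicator (fun s => f (a - s / c)) s := by
  rw [integral_indicator measurableSet_Ioc,
    ← intervalIntegral.integral_of_le (mul_nonneg hc.le (sub_nonneg.2 hba)),
    intervalIntegral.integral_comp_sub_div f hc.ne', mul_div_cancel_left₀ _ hc.ne', zero_div,
    sub_zero, sub_sub_cancel, smul_eq_mul]

theorem div_pow_le_exp_of_le_tangent {g : ℝ → ℝ} {a b g' s : ℝ} {k : ℕ} (hga : 0 < g a)
    (hg0 : ∀ t ∈ Icc b a, 0 ≤ g t) (htan : ∀ t ∈ Icc b a, g t ≤ g a + (t - a) * g')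
    (hs : s ∈ Ioc 0 (k * (a - b))) :
    ‖(g (a - s / k) / g a) ^ k‖ ≤ Real.exp (-(g' / g a) * s) := by
  have hk : (0 : ℝ) < k := Nat.cast_pos.2 (Nat.pos_of_ne_zero fun h => by simp [h] at hs)
  have hsk : s / k ≤ a - b := by rw [div_le_iff₀ hk]; linarith [hs.2]
  have ht : a - s / k ∈ Icc b a := ⟨by linarith, by linarith [div_pos hs.1 hk]⟩
  have hexp : Real.exp (-(g' / g a) * s) = Real.exp (-(s / k) * g' / g a) ^ k := by
    rw [← Real.exp_nat_mul]; congr 1; field_simp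
  rw [hexp, Real.norm_eq_abs, abs_of_nonneg (pow_nonneg (div_nonneg (hg0 _ ht) hga.le) k)]
  refine pow_le_pow_left₀ (div_nonneg (hg0 _ ht) hga.le) ?_ k
  calc g (a - s / k) / g a ≤ -(s / k) * g' / g a + 1 := by
        rw [div_add_one hga.ne']; gcongr; linarith [htan _ ht]
    _ ≤ Real.exp (-(s / k) * g' / g a) := Real.add_one_le_exp _

theorem tendsto_nat_mul_integral_div_pow {g : ℝ → ℝ} {a b g' : ℝ} (hba : b < a)
    (hgm : Measurable g) (hg : HasDerivAt g g' a) (hga : 0 < g a) (hg' : 0 < g')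
    (hg0 : ∀ t ∈ Icc b a, 0 ≤ g t) (htan : ∀ t ∈ Icc b a, g t ≤ g a + (t - a) * g') :
    Tendsto (fun k : ℕ => k * ∫ t in b..a, (g t / g a) ^ k) atTop (𝓝 (g a / g')) := by
  set F : ℕ → ℝ → ℝ := fun k =>
    (Ioc 0 (k * (a - b))).indicator fun s => (g (a - s / k) / g a) ^ k
  set bound : ℝ → ℝ := (Ioi 0).indicator fun s => Real.exp (-(g' / g a) * s)
  have hc : -(g' / g a) < 0 := neg_neg_iff_pos.2 (div_pos hg' hga)
  have hbound_int : Integrable bound :=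
    (integrable_indicator_iff measurableSet_Ioi).2 (integrableOn_exp_mul_Ioi hc 0)
  have hbound_integral : ∫ s, bound s = g a / g' := by
    rw [integral_indicator measurableSet_Ioi, integral_exp_mul_Ioi hc 0]
    field_simp
    simp
  have hdom : ∀ k : ℕ, ∀ᵐ s, ‖F k s‖ ≤ bound s := by
    refine fun k => Eventually.of_forall fun s => ?_
    simp only [F, bound]
    by_cases hs : s ∈ Ioc 0 (k * (a - b))
    · rw [indicator_of_mem hs, indicator_of_mem (mem_Ioi.2 hs.1)]
      exact div_pow_le_exp_of_le_tangent hga hg0 htan hs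
    · rw [indicator_of_notMem hs, norm_zero]
      exact indicator_nonneg (fun s _ => (Real.exp_pos _).le) s
  have hlim : ∀ᵐ s, Tendsto (fun k => F k s) atTop (𝓝 (bound s)) := by
    refine Eventually.of_forall fun s => ?_
    simp only [F, bound]
    by_cases hs : 0 < s
    · rw [indicator_of_mem (mem_Ioi.2 hs)]
      refine (hg.tendsto_div_pow_nat hga.ne' s).congr' ?_
      have hlarge : ∀ᶠ k : ℕ in atTop, s ≤ k * (a - b) :=
        (tendsto_natCast_atTop_atTop.atTop_mul_const (sub_pos.2 hba)).eventually_ge_atTop s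
      filter_upwards [hlarge] with k hk
      rw [indicator_of_mem (mem_Ioc.2 ⟨hs, hk⟩)]
    · rw [indicator_of_notMem (fun h => hs (mem_Ioi.1 h))]
      exact tendsto_const_nhds.congr fun k => (indicator_of_notMem (fun h => hs h.1) _).symm
  rw [← hbound_integral]
  refine (tendsto_integral_of_dominated_convergence bound (fun k => ?_) hbound_int hdom
    hlim).congr' ?_
  · exact ((by fun_prop : Measurable fun s => (g (a - s / k) / g a) ^ k).indicator
      measurableSet_Ioc).aestronglyMeasurable
  · filter_upwards [eventually_gt_atTop 0] with k hk
    exact (mul_integral_eq_integral_indicator_comp_sub_div (fun t => (g t / g a) ^ k) hba.le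
      (Nat.cast_pos.2 hk)).symm

theorem integral_sub_mul_deriv_eq {v v' : ℝ → ℝ} {a b : ℝ}
    (hv : ∀ t ∈ uIcc a b, HasDerivAt v (v' t) t) (hv' : IntervalIntegrable v' volume a b) :
    ∫ t in a..b, (b - t) * v' t = (∫ t in a..b, v t) - (b - a) * v a := by
  rw [intervalIntegral.integral_mul_deriv_eq_deriv_mul (u := fun t => b - t) (u' := fun _ => -1)
    (fun t _ => (hasDerivAt_id t).const_sub b) hv intervalIntegrable_const hv']
  simp only [sub_self, zero_mul, zero_sub, neg_one_mul, intervalIntegral.integral_neg]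
  ring

theorem hasDerivAt_one_sub_exp_neg (t : ℝ) :
    HasDerivAt (fun t => 1 - Real.exp (-t)) (Real.exp (-t)) t := by
  simpa using ((Real.hasDerivAt_exp (-t)).comp t (hasDerivAt_neg t)).const_sub 1

theorem one_sub_exp_neg_le_tangent (a t : ℝ) :
    1 - Real.exp (-t) ≤ 1 - Real.exp (-a) + (t - a) * Real.exp (-a) := by
  have h := mul_le_mul_of_nonneg_left (Real.add_one_le_exp (a - t)) (Real.exp_pos (-a)).le
  rw [← Real.exp_add, show -a + (a - t) = -t by ring] at h
  linear_combination h

theorem integral_sub_mul_exp_neg_mul_one_sub_exp_neg_pow_s13 {α : ℝ} {k : ℕ} (hk : 1 ≤ k) :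
    ∫ t in (0 : ℝ)..α, (α - t) * Real.exp (-t) * (1 - Real.exp (-t)) ^ (k - 1)
      = (k : ℝ)⁻¹ * ∫ t in (0 : ℝ)..α, (1 - Real.exp (-t)) ^ k := by
  have hderiv (t : ℝ) : HasDerivAt (fun t => (1 - Real.exp (-t)) ^ k)
      (k * (1 - Real.exp (-t)) ^ (k - 1) * Real.exp (-t)) t :=
    (hasDerivAt_one_sub_exp_neg t).pow k
  have hcont : Continuous fun t => (k : ℝ) * (1 - Real.exp (-t)) ^ (k - 1) * Real.exp (-t) := by
    fun_prop
  have h := integral_sub_mul_deriv_eq (fun t _ => hderiv t) (hcont.intervalIntegrable 0 α)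
  simp only [neg_zero, Real.exp_zero, sub_self, zero_pow (by omega : k ≠ 0), mul_zero,
    sub_zero] at h
  rw [← h, ← intervalIntegral.integral_const_mul]
  congr 1; ext t
  field_simp

/-- Asymptotics of `p_α^E`: as `k → ∞`, `p_α^E(k) ~ α⁻¹(e^α - 1) k⁻² (1-e^{-α})^k`. -/
theorem stmt_13 (α : ℝ) (hα : 0 < α) (p : ℕ → ℝ)
    (hk : ∀ k : ℕ, 1 ≤ k →
      p k = α⁻¹ * ∫ t in (0:ℝ)..α,
        (α - t) * Real.exp (-t) * (1 - Real.exp (-t)) ^ (k - 1)) :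
    Tendsto (fun k : ℕ =>
        p k / (α⁻¹ * (Real.exp α - 1) * ((k : ℝ) ^ 2)⁻¹ * (1 - Real.exp (-α)) ^ k))
      atTop (nhds 1) := by
  have hq : 0 < 1 - Real.exp (-α) := sub_pos.2 (Real.exp_lt_one_iff.2 (neg_lt_zero.2 hα))
  have hE : Real.exp α - 1 ≠ 0 := (sub_pos.2 (Real.one_lt_exp_iff.2 hα)).ne'
  have hlaplace := tendsto_nat_mul_integral_div_pow hα (by fun_prop)
    (hasDerivAt_one_sub_exp_neg α) hq (Real.exp_pos _)
    (fun t ht => sub_nonneg.2 (Real.exp_le_one_iff.2 (neg_nonpos.2 ht.1)))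
    (fun t _ => one_sub_exp_neg_le_tangent α t)
  have hlimit : (1 - Real.exp (-α)) / Real.exp (-α) = Real.exp α - 1 := by
    rw [Real.exp_neg]; field_simp
  rw [hlimit] at hlaplace
  refine (div_self hE ▸ hlaplace.div_const _).congr' ?_
  filter_upwards [eventually_ge_atTop 1] with k hk1
  simp_rw [div_pow]
  rw [hk k hk1, integral_sub_mul_exp_neg_mul_one_sub_exp_neg_pow_s13 hk1, intervalIntegral.integral_div]
  field_simp
end

section
/- For α ∈ (0,1] and |x| < (1 - e^{-α})⁻¹, the probability generating function of D_α^E satisfies ∑_{k=0}^∞ p_α^E(k) x^k = 1 - α/2 + (x/α) ∫₀^α (α - t) / ((1-x)e^t + x) dt. -/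
open Real MeasureTheory
open scoped Interval

/-!
Expanding `1 / (1 - x (1 - e^{-t}))` as a geometric series, the `k`-th term of the generating
function is `x / α` times the integral of `(α - t) e^{-t} (x (1 - e^{-t}))^{k-1}`. On `[0, α]` the
ratio is bounded by `|x| (1 - e^{-α}) < 1`, so dominated convergence lets the sum pass under the
integral, and `e^{-t} / (1 - x (1 - e^{-t})) = 1 / ((1 - x) e^t + x)`.
-/

theorem intervalIntegral.hasSum_integral_mul_pow {𝕜 : Type*} [RCLike 𝕜] {μ : Measure ℝ}
    {a b r : ℝ} {f g : ℝ → 𝕜} (hf : IntervalIntegrable f μ a b)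
    (hg : AEStronglyMeasurable g (μ.restrict (Ι a b))) (hr₀ : 0 ≤ r) (hr : r < 1)
    (hgr : ∀ t ∈ Ι a b, ‖g t‖ ≤ r) :
    HasSum (fun k : ℕ => ∫ t in a..b, f t * g t ^ k ∂μ) (∫ t in a..b, f t * (1 - g t)⁻¹ ∂μ) := by
  refine hasSum_integral_of_dominated_convergence (fun k t => ‖f t‖ * r ^ k)
    (fun k => hf.def'.aestronglyMeasurable.mul (hg.pow k)) (fun k => ?_)
    (ae_of_all _ fun t _ => (summable_geometric_of_lt_one hr₀ hr).mul_left _) ?_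
    (ae_of_all _ fun t ht => ?_)
  · refine ae_of_all _ fun t ht => ?_
    rw [norm_mul, norm_pow]
    gcongr
    exact hgr t ht
  · simp only [tsum_mul_left, tsum_geometric_of_lt_one hr₀ hr]
    exact hf.norm.mul_const _
  · exact (hasSum_geometric_of_norm_lt_one ((hgr t ht).trans_lt hr)).mul_left (f t)

theorem div_one_sub_mul_one_sub_exp_neg (a x t : ℝ) :
    a * exp (-t) * (1 - x * (1 - exp (-t)))⁻¹ = a / ((1 - x) * exp t + x) := by
  have hden : (1 - x) * exp t + x = (exp (-t))⁻¹ * (1 - x * (1 - exp (-t))) := by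
    rw [exp_neg, inv_inv]
    field_simp
    ring
  rw [hden, div_eq_mul_inv, mul_inv, inv_inv]
  ring

theorem norm_mul_one_sub_exp_neg_le {x t α : ℝ} (ht : t ∈ Set.Icc 0 α) :
    ‖x * (1 - exp (-t))‖ ≤ |x| * (1 - exp (-α)) := by
  have h1 : exp (-α) ≤ exp (-t) := exp_le_exp.2 (neg_le_neg ht.2)
  have h2 : exp (-t) ≤ 1 := exp_le_one_iff.2 (neg_nonpos.2 ht.1)
  rw [norm_mul, Real.norm_eq_abs, Real.norm_eq_abs, abs_of_nonneg (sub_nonneg.2 h2)]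
  gcongr

theorem stmt_14_general (α : ℝ) (p : ℕ → ℝ)
    (h0 : p 0 = 1 - α / 2)
    (hk : ∀ k : ℕ, 1 ≤ k →
      p k = α⁻¹ * ∫ t in (0:ℝ)..α,
        (α - t) * Real.exp (-t) * (1 - Real.exp (-t)) ^ (k - 1))
    (x : ℝ) (hx : |x| < (1 - Real.exp (-α))⁻¹) :
    ∑' k : ℕ, p k * x ^ k =
      1 - α / 2 + (x / α) * ∫ t in (0:ℝ)..α,
        (α - t) / ((1 - x) * Real.exp t + x) := by
  have hexp : 0 < 1 - exp (-α) := inv_pos.mp ((abs_nonneg x).trans_lt hx)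
  have hα : 0 < α := by simpa using hexp
  have hratio : ∀ t ∈ Ι 0 α, ‖x * (1 - exp (-t))‖ ≤ |x| * (1 - exp (-α)) := fun t ht =>
    norm_mul_one_sub_exp_neg_le (Set.Ioc_subset_Icc_self (Set.uIoc_of_le hα.le ▸ ht))
  have hr : |x| * (1 - exp (-α)) < 1 := (lt_mul_inv_iff₀ hexp).1 (by rwa [one_mul])
  have hsum := (intervalIntegral.hasSum_integral_mul_pow
    (f := fun t => (α - t) * exp (-t)) (g := fun t => x * (1 - exp (-t))) (μ := volume)
    (Continuous.intervalIntegrable (by fun_prop) _ _) (by fun_prop) (by positivity) hr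
    hratio).mul_left (x / α)
  simp only [div_one_sub_mul_one_sub_exp_neg] at hsum
  have hterm : ∀ k, x / α * ∫ t in (0:ℝ)..α, (α - t) * exp (-t) * (x * (1 - exp (-t))) ^ k
      = p (k + 1) * x ^ (k + 1) := by
    intro k
    have hpow : ∀ t, (α - t) * exp (-t) * (x * (1 - exp (-t))) ^ k
        = (α - t) * exp (-t) * (1 - exp (-t)) ^ k * x ^ k := fun t => by rw [mul_pow]; ring
    simp only [hpow, intervalIntegral.integral_mul_const, hk (k + 1) le_add_self,
      add_tsub_cancel_right]
    ring
  rw [funext hterm] at hsum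
  rw [((hasSum_nat_add_iff (f := fun k => p k * x ^ k) 1).mp hsum).tsum_eq,
    Finset.sum_range_one, h0, pow_zero, mul_one, add_comm]

/-- The probability generating function of `D_α^E`:
for `|x| < (1-e^{-α})⁻¹`,
`∑ p_α^E(k) x^k = 1 - α/2 + (x/α) ∫₀^α (α-t)/((1-x)eᵗ + x) dt`. -/
theorem stmt_14 (α : ℝ) (hα : α ∈ Set.Ioc (0:ℝ) 1) (p : ℕ → ℝ)
    (h0 : p 0 = 1 - α / 2)
    (hk : ∀ k : ℕ, 1 ≤ k →
      p k = α⁻¹ * ∫ t in (0:ℝ)..α,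
        (α - t) * Real.exp (-t) * (1 - Real.exp (-t)) ^ (k - 1))
    (x : ℝ) (hx : |x| < (1 - Real.exp (-α))⁻¹) :
    ∑' k : ℕ, p k * x ^ k =
      1 - α / 2 + (x / α) * ∫ t in (0:ℝ)..α,
        (α - t) / ((1 - x) * Real.exp t + x) :=
  stmt_14_general α p h0 hk x hx
end

section
/- Let (X_n) be a sequence of stochastic processes on [0,∞) such that each X_n(·,ω) is nondecreasing in t, and let f : [0,∞) → ℝ be continuous. If X_n(t) → f(t) in probability for every t ≥ 0, then sup_{0 ≤ t ≤ u} |X_n(t) - f(t)| → 0 in probability for every u > 0. -/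
open MeasureTheory Filter

/-! Fix a grid `S ⊂ [0, u]` so fine that `f` varies by at most `ε/3` between neighbouring
grid points. Every `t ∈ [0, u]` is bracketed by grid points `p ≤ t ≤ q`, and monotonicity
squeezes `X_n(t)` between `X_n(p)` and `X_n(q)`; hence `sup_{[0,u]} |X_n - f| ≤ 2ε/3` as soon as
`|X_n - f| < ε/3` at every grid point. By the union bound over the finitely many grid points,
the probability of the complementary event tends to `0`. -/

open Set Finset in
theorem exists_finset_bracket_sub_lt {a b δ : ℝ} (hab : a ≤ b) (hδ : 0 < δ) :
    ∃ S : Finset ℝ, ↑S ⊆ Icc a b ∧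
      ∀ t ∈ Icc a b, ∃ p ∈ S, ∃ q ∈ S, p ≤ t ∧ t ≤ q ∧ q - p < δ := by
  obtain ⟨h, hh, hhδ⟩ := exists_between hδ
  obtain ⟨N, hN⟩ := exists_nat_gt ((b - a) / h)
  set x : ℕ → ℝ := fun i => min (a + i * h) b
  refine ⟨(range (N + 1)).image x, ?_, ?_⟩
  · simp only [coe_image, image_subset_iff]
    intro i _
    exact ⟨le_min (le_add_of_nonneg_right (by positivity)) hab, min_le_right _ _⟩
  · rintro t ⟨hat, htb⟩
    set k := ⌊(t - a) / h⌋₊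
    have hk : (k : ℝ) ≤ (t - a) / h := Nat.floor_le (div_nonneg (sub_nonneg.2 hat) hh.le)
    have hk_le : (k : ℝ) * h ≤ t - a := (le_div_iff₀ hh).1 hk
    have hk_lt : t - a < (k + 1 : ℝ) * h := (div_lt_iff₀ hh).1 (Nat.lt_floor_add_one _)
    have hkN : k < N := by
      have : (k : ℝ) < N := calc
        (k : ℝ) ≤ (t - a) / h := hk
        _ ≤ (b - a) / h := by gcongr
        _ < N := hN
      exact_mod_cast this
    refine ⟨x k, mem_image_of_mem x (mem_range.2 (by omega)),
      x (k + 1), mem_image_of_mem x (mem_range.2 (by omega)), ?_, ?_, ?_⟩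
    · exact min_le_of_left_le (by linarith)
    · exact le_min (by push_cast; linarith) htb
    · simp only [x]
      push_cast
      rcases min_cases (a + k * h) b with ⟨hp, _⟩ | ⟨hp, _⟩ <;>
        rcases min_cases (a + (k + 1) * h) b with ⟨hq, _⟩ | ⟨hq, _⟩ <;>
        rw [hp, hq] <;> linarith

open Set in
theorem exists_finset_bracket_of_continuousOn {f : ℝ → ℝ} {a b η : ℝ}
    (hf : ContinuousOn f (Icc a b)) (hab : a ≤ b) (hη : 0 < η) :
    ∃ S : Finset ℝ, ↑S ⊆ Icc a b ∧
      ∀ t ∈ Icc a b, ∃ p ∈ S, ∃ q ∈ S, p ≤ t ∧ t ≤ q ∧ |f t - f p| ≤ η ∧ |f t - f q| ≤ η := by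
  obtain ⟨δ, hδ, hfδ⟩ := Metric.uniformContinuousOn_iff.1
    (isCompact_Icc.uniformContinuousOn_of_continuous hf) η hη
  obtain ⟨S, hSsub, hS⟩ := exists_finset_bracket_sub_lt hab hδ
  refine ⟨S, hSsub, fun t ht => ?_⟩
  obtain ⟨p, hp, q, hq, hpt, htq, hpq⟩ := hS t ht
  have hfp : dist (f t) (f p) < η :=
    hfδ t ht p (hSsub hp) (by rw [Real.dist_eq, abs_of_nonneg (by linarith)]; linarith)
  have hfq : dist (f t) (f q) < η :=
    hfδ t ht q (hSsub hq) (by rw [Real.dist_eq, abs_of_nonpos (by linarith)]; linarith)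
  rw [Real.dist_eq] at hfp hfq
  exact ⟨p, hp, q, hq, hpt, htq, hfp.le, hfq.le⟩

open Set in
theorem iSup_abs_sub_le_of_monotoneOn {g f : ℝ → ℝ} {a b c η : ℝ} {S : Finset ℝ}
    (hg : MonotoneOn g (Icc a b)) (hab : a ≤ b) (hSsub : ↑S ⊆ Icc a b)
    (hS : ∀ t ∈ Icc a b, ∃ p ∈ S, ∃ q ∈ S, p ≤ t ∧ t ≤ q ∧ |f t - f p| ≤ η ∧ |f t - f q| ≤ η)
    (hgf : ∀ p ∈ S, |g p - f p| ≤ c) :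
    ⨆ t : Icc a b, |g t - f t| ≤ c + η := by
  have : Nonempty (Icc a b) := (nonempty_Icc.2 hab).to_subtype
  refine ciSup_le fun ⟨t, ht⟩ => ?_
  obtain ⟨p, hp, q, hq, hpt, htq, hfp, hfq⟩ := hS t ht
  have hgp := hg (hSsub hp) ht hpt
  have hgq := hg ht (hSsub hq) htq
  have hp' := hgf p hp
  have hq' := hgf q hq
  rw [abs_le] at hfp hfq hp' hq' ⊢
  constructor <;> linarith

theorem tendsto_measure_biUnion_finset_of_tendstoInMeasure {Ω α ι E : Type*}
    [MeasurableSpace Ω] [PseudoMetricSpace E] {μ : Measure Ω} {l : Filter α}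
    {Y : α → ι → Ω → E} {g : ι → Ω → E} (S : Finset ι)
    (hY : ∀ i ∈ S, TendstoInMeasure μ (fun n => Y n i) l (g i)) {η : ℝ} (hη : 0 < η) :
    Tendsto (fun n => μ (⋃ i ∈ S, {ω | η ≤ dist (Y n i ω) (g i ω)})) l (nhds 0) := by
  have hsum : Tendsto (fun n => ∑ i ∈ S, μ {ω | η ≤ dist (Y n i ω) (g i ω)}) l (nhds 0) := by
    simpa using tendsto_finsetSum S fun i hi => tendstoInMeasure_iff_dist.1 (hY i hi) η hη
  exact tendsto_of_tendsto_of_tendsto_of_le_of_le tendsto_const_nhds hsum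
    (fun _ => zero_le) fun n => measure_biUnion_finset_le S _

theorem stmt_15_general {Ω : Type*} [MeasurableSpace Ω] (μ : Measure Ω)
    (X : ℕ → ℝ → Ω → ℝ) (f : ℝ → ℝ)
    (hmono : ∀ n ω, ∀ s t : ℝ, s ≤ t → X n s ω ≤ X n t ω)
    (hf : Continuous f)
    (hconv : ∀ t : ℝ, 0 ≤ t →
      TendstoInMeasure μ (fun n ω => X n t ω) atTop (fun _ => f t)) :
    ∀ u : ℝ, 0 < u → ∀ ε : ℝ, 0 < ε →
      Tendsto (fun n => μ {ω | ε ≤ ⨆ t : Set.Icc (0:ℝ) u, |X n (t : ℝ) ω - f t|})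
        atTop (nhds 0) := by
  intro u hu ε hε
  obtain ⟨S, hSsub, hS⟩ :=
    exists_finset_bracket_of_continuousOn hf.continuousOn hu.le (by positivity : 0 < ε / 3)
  have hgrid := tendsto_measure_biUnion_finset_of_tendstoInMeasure (g := fun t _ => f t) S
    (fun p hp => hconv p (hSsub hp).1) (by positivity : 0 < ε / 3)
  refine tendsto_of_tendsto_of_tendsto_of_le_of_le tendsto_const_nhds hgrid
    (fun _ => zero_le) fun n => measure_mono fun ω hω => ?_
  by_contra hgood
  simp only [Set.mem_iUnion, Set.mem_ofPred_eq, not_exists, not_le, Real.dist_eq] at hgood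
  have hsup := iSup_abs_sub_le_of_monotoneOn (fun s _ t _ hst => hmono n ω s t hst) hu.le hSsub hS
    fun p hp => (hgood p hp).le
  exact (hsup.trans_lt (by linarith)).not_ge hω

/-- If `X_n(t)` are stochastic processes, each increasing in `t`, converging in
probability to a continuous deterministic function `f(t)` for each fixed `t ≥ 0`,
then the convergence is uniform on compacts in probability. -/
theorem stmt_15 {Ω : Type*} [MeasurableSpace Ω] (μ : Measure Ω) [IsProbabilityMeasure μ]
    (X : ℕ → ℝ → Ω → ℝ) (f : ℝ → ℝ)
    (hmono : ∀ n ω, ∀ s t : ℝ, s ≤ t → X n s ω ≤ X n t ω)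
    (hf : Continuous f)
    (hconv : ∀ t : ℝ, 0 ≤ t →
      TendstoInMeasure μ (fun n ω => X n t ω) atTop (fun _ => f t)) :
    ∀ u : ℝ, 0 < u → ∀ ε : ℝ, 0 < ε →
      Tendsto (fun n => μ {ω | ε ≤ ⨆ t : Set.Icc (0:ℝ) u, |X n (t : ℝ) ω - f t|})
        atTop (nhds 0) :=
  stmt_15_general μ X f hmono hf hconv
end

section
/- Let X_n ≥ 0 and Z ≥ 0 be random variables and Y_n random elements (X_n, Y_n on the same space) such that for every real x, P(X_n ≤ x | Y_n) → P(Z ≤ x) in probability as n → ∞, and E[X_n] → E[Z] < ∞. Then E[X_n | Y_n] → E[Z] in probability. -/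
open MeasureTheory Filter Topology

/-!
For a mesh `h > 0` and `K : ℕ`, the staircase `g = staircase h K` satisfies
`min x (K h) - h ≤ g x ≤ x` for `x ≥ 0`, and it is a finite combination of indicators of the
half-lines `(-∞, i h]`. Hence `E[g(X_n) | Y_n] = ∑ h (1 - P(X_n ≤ i h | Y_n))`, a bounded
sequence converging in probability, and so in `L¹`, to the constant `E[g(Z)]`, which is within
`2h` of `E[Z]` once `K` is large. The gap `E[X_n | Y_n] - E[g(X_n) | Y_n]` is nonnegative and its
mean tends to `E[Z] - E[g(Z)] ≤ 2h`. Together, `E[X_n | Y_n] → E[Z]` in `L¹`, hence in probability.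
-/

/-- `staircase h K x = h * #{i ∈ [1, K] | i * h < x}`. -/
noncomputable def staircase (h : ℝ) (K : ℕ) (x : ℝ) : ℝ :=
  ∑ i ∈ Finset.Icc 1 K, h * (1 - (Set.Iic ((i : ℝ) * h)).indicator 1 x)

section Staircase

variable {h x : ℝ} {K : ℕ}

theorem staircase_succ : staircase h (K + 1) x =
    staircase h K x + h * (1 - (Set.Iic (((K : ℝ) + 1) * h)).indicator 1 x) := by
  rw [staircase, Finset.sum_Icc_succ_top (Nat.le_add_left 1 K), Nat.cast_succ]
  rfl

theorem staircase_eq_of_mul_lt (hh : 0 ≤ h) (hx : K * h < x) : staircase h K x = K * h := by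
  have hterm : ∀ i ∈ Finset.Icc 1 K, h * (1 - (Set.Iic ((i : ℝ) * h)).indicator 1 x) = h := by
    intro i hi
    have hiK : (i : ℝ) ≤ K := by exact_mod_cast (Finset.mem_Icc.mp hi).2
    have : x ∉ Set.Iic ((i : ℝ) * h) := fun hxi =>
      (lt_of_le_of_lt (mul_le_mul_of_nonneg_right hiK hh) hx).not_ge hxi
    simp [Set.indicator_of_notMem this]
  rw [staircase, Finset.sum_congr rfl hterm, Finset.sum_const, Nat.card_Icc, nsmul_eq_mul,
    add_tsub_cancel_right]

theorem staircase_le_min (hh : 0 ≤ h) (hx : 0 ≤ x) : staircase h K x ≤ min x (K * h) := by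
  induction K with
  | zero => simp [staircase, hx]
  | succ K ih =>
    rw [staircase_succ, Nat.cast_succ]
    by_cases hxK : x ≤ ((K : ℝ) + 1) * h
    · simp only [Set.indicator_of_mem (Set.mem_Iic.mpr hxK), Pi.one_apply, sub_self, mul_zero,
        add_zero]
      exact ih.trans (min_le_min le_rfl (by nlinarith))
    · simp only [Set.indicator_of_notMem (fun h' => hxK (Set.mem_Iic.mp h')), sub_zero, mul_one]
      rw [min_eq_right (not_le.mp hxK).le]
      linarith [ih.trans (min_le_right _ _)]

theorem min_sub_le_staircase (hh : 0 ≤ h) : min x (K * h) - h ≤ staircase h K x := by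
  induction K with
  | zero => simp [staircase, hh]
  | succ K ih =>
    rw [staircase_succ, Nat.cast_succ]
    by_cases hxK : x ≤ ((K : ℝ) + 1) * h
    · simp only [Set.indicator_of_mem (Set.mem_Iic.mpr hxK), Pi.one_apply, sub_self, mul_zero,
        add_zero, min_eq_left hxK]
      rcases le_or_gt x (K * h) with hx | hx
      · simpa [min_eq_left hx] using ih
      · rw [staircase_eq_of_mul_lt hh hx]
        linarith
    · simp only [Set.indicator_of_notMem (fun h' => hxK (Set.mem_Iic.mp h')), sub_zero, mul_one]
      rw [min_eq_right (not_le.mp hxK).le,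
        staircase_eq_of_mul_lt hh (lt_of_le_of_lt (by nlinarith) (not_le.mp hxK))]
      linarith

end Staircase

theorem abs_sum_mul_one_sub_sub_le {ι : Type*} (s : Finset ι) (a p q : ι → ℝ) :
    |∑ i ∈ s, a i * (1 - p i) - ∑ i ∈ s, a i * (1 - q i)| ≤ ∑ i ∈ s, |a i| * |p i - q i| := by
  rw [← Finset.sum_sub_distrib]
  refine (Finset.abs_sum_le_sum_abs _ _).trans_eq (Finset.sum_congr rfl fun i _ => ?_)
  rw [← abs_mul, ← abs_neg]
  ring_nf

namespace MeasureTheory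

variable {Ω : Type*} {m0 : MeasurableSpace Ω} {μ : Measure Ω}

theorem tendstoInMeasure_of_tendsto_integral_abs_sub {ι : Type*} {l : Filter ι}
    {f : ι → Ω → ℝ} {g : Ω → ℝ} (hf : ∀ i, Integrable (f i) μ) (hg : Integrable g μ)
    (hfg : Tendsto (fun i => ∫ ω, |f i ω - g ω| ∂μ) l (𝓝 0)) :
    TendstoInMeasure μ f l g := by
  refine tendstoInMeasure_of_tendsto_eLpNorm one_ne_zero (fun i => (hf i).1) hg.1 ?_
  have h_eq : ∀ i, eLpNorm (f i - g) 1 μ = ENNReal.ofReal (∫ ω, |f i ω - g ω| ∂μ) := fun i => by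
    rw [eLpNorm_one_eq_lintegral_enorm, ← ofReal_integral_norm_eq_lintegral_enorm ((hf i).sub hg)]
    rfl
  simpa [h_eq] using ENNReal.tendsto_ofReal hfg

theorem integral_abs_sub_le_of_ae_abs_sub_le [IsFiniteMeasure μ] {f g : Ω → ℝ} {B : ℝ}
    (hf : AEStronglyMeasurable f μ) (hg : AEStronglyMeasurable g μ)
    (hB : ∀ᵐ ω ∂μ, |f ω - g ω| ≤ B) {δ : ℝ} (hδ : 0 ≤ δ) :
    ∫ ω, |f ω - g ω| ∂μ ≤ δ * μ.real Set.univ + |B| * μ.real {ω | δ ≤ dist (f ω) (g ω)} := by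
  set A := {ω | δ ≤ dist (f ω) (g ω)}
  have hA : NullMeasurableSet A μ :=
    nullMeasurableSet_le aemeasurable_const (hf.aemeasurable.dist hg.aemeasurable)
  have hbound : ∀ᵐ ω ∂μ, |f ω - g ω| ≤ δ + A.indicator (fun _ => |B|) ω := by
    filter_upwards [hB] with ω hω
    by_cases hωA : ω ∈ A
    · simp only [Set.indicator_of_mem hωA]
      linarith [le_abs_self B]
    · simp only [Set.indicator_of_notMem hωA]
      simp only [A, Set.mem_ofPred_eq, Real.dist_eq, not_le] at hωA
      linarith
  refine (integral_mono_ae (Integrable.of_bound (hf.sub hg).norm B (by simpa using hB))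
    ((integrable_const δ).add ((integrable_const |B|).indicator₀ hA)) hbound).trans_eq ?_
  rw [integral_add' (integrable_const δ) ((integrable_const |B|).indicator₀ hA),
    integral_const, integral_indicator₀ hA, setIntegral_const]
  simp [smul_eq_mul, mul_comm]

theorem tendsto_integral_abs_sub_of_tendstoInMeasure [IsFiniteMeasure μ] {ι : Type*}
    {l : Filter ι} {f : ι → Ω → ℝ} {g : Ω → ℝ} {B : ℝ}
    (hf : ∀ i, AEStronglyMeasurable (f i) μ) (hg : AEStronglyMeasurable g μ)
    (hB : ∀ i, ∀ᵐ ω ∂μ, |f i ω - g ω| ≤ B) (hfg : TendstoInMeasure μ f l g) :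
    Tendsto (fun i => ∫ ω, |f i ω - g ω| ∂μ) l (𝓝 0) := by
  rw [Metric.tendsto_nhds]
  intro ε hε
  set δ := ε / (2 * (μ.real Set.univ + 1))
  have hδ : 0 < δ := by positivity
  have hδμ : δ * μ.real Set.univ < ε / 2 := by
    rw [div_mul_eq_mul_div, div_lt_iff₀ (by positivity)]
    nlinarith
  have hsmall := (tendstoInMeasure_iff_measureReal_dist.mp hfg δ hδ).eventually
    (gt_mem_nhds (show 0 < ε / (2 * (|B| + 1)) by positivity))
  filter_upwards [hsmall] with i hi
  have hBA : |B| * μ.real {ω | δ ≤ dist (f i ω) (g ω)} < ε / 2 := calc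
    _ ≤ |B| * (ε / (2 * (|B| + 1))) := by gcongr
    _ < ε / 2 := by
      rw [mul_div_assoc', div_lt_div_iff₀ (by positivity) two_pos]
      nlinarith [abs_nonneg B]
  rw [Real.dist_eq, sub_zero, abs_of_nonneg (integral_nonneg fun ω => abs_nonneg _)]
  linarith [integral_abs_sub_le_of_ae_abs_sub_le (hf i) hg (hB i) hδ.le]

theorem integral_abs_sub_le_of_ae_le [IsProbabilityMeasure μ] {Y S : Ω → ℝ} {I c : ℝ}
    (hY : Integrable Y μ) (hS : Integrable S μ) (hSY : S ≤ᵐ[μ] Y) :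
    ∫ ω, |Y ω - I| ∂μ ≤ (∫ ω, Y ω ∂μ - I) + 2 * ∫ ω, |S ω - c| ∂μ + 2 * |I - c| := by
  have hSc : Integrable (fun ω => |S ω - c|) μ := (hS.sub (integrable_const c)).abs
  have hpoint : ∀ᵐ ω ∂μ, |Y ω - I| ≤ (Y ω - S ω) + |S ω - c| + |I - c| := by
    filter_upwards [hSY] with ω hω
    have := abs_sub_le (Y ω) (S ω) I
    have := abs_sub_le (S ω) c I
    rw [abs_of_nonneg (sub_nonneg.mpr hω), abs_sub_comm c I] at *
    linarith
  have hmean_S : c - ∫ ω, S ω ∂μ ≤ ∫ ω, |S ω - c| ∂μ := by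
    have h := abs_integral_le_integral_abs (f := fun ω => S ω - c) (μ := μ)
    rw [integral_sub hS (integrable_const c), integral_const, probReal_univ, one_smul] at h
    linarith [neg_abs_le (∫ ω, S ω ∂μ - c)]
  have hYS : Integrable (fun ω => Y ω - S ω) μ := hY.sub hS
  have hYSc : Integrable (fun ω => Y ω - S ω + |S ω - c|) μ := hYS.add hSc
  have hint : ∫ ω, |Y ω - I| ∂μ ≤ ∫ ω, (Y ω - S ω + |S ω - c| + |I - c|) ∂μ :=
    integral_mono_ae (hY.sub (integrable_const I)).abs (hYSc.add (integrable_const _)) hpoint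
  rw [integral_add hYSc (integrable_const _), integral_add hYS hSc, integral_sub hY hS,
    integral_const, probReal_univ, one_smul] at hint
  linarith [le_abs_self (I - c)]

theorem tendsto_integral_abs_sub_of_forall_exists_le [IsProbabilityMeasure μ] {ι : Type*}
    {l : Filter ι} {Y : ι → Ω → ℝ} {I : ℝ} (hY : ∀ i, Integrable (Y i) μ)
    (hmean : Tendsto (fun i => ∫ ω, Y i ω ∂μ) l (𝓝 I))
    (happrox : ∀ η > 0, ∃ (S : ι → Ω → ℝ) (c : ℝ), (∀ i, Integrable (S i) μ) ∧
      (∀ i, S i ≤ᵐ[μ] Y i) ∧ Tendsto (fun i => ∫ ω, |S i ω - c| ∂μ) l (𝓝 0) ∧ |I - c| ≤ η) :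
    Tendsto (fun i => ∫ ω, |Y i ω - I| ∂μ) l (𝓝 0) := by
  rw [Metric.tendsto_nhds]
  intro ε hε
  obtain ⟨S, c, hS, hSY, hSc, hcI⟩ := happrox (ε / 6) (by positivity)
  have hY_near := (Metric.tendsto_nhds.mp hmean) (ε / 6) (by positivity)
  have hS_near := (Metric.tendsto_nhds.mp hSc) (ε / 6) (by positivity)
  filter_upwards [hY_near, hS_near] with i hYi hSi
  rw [Real.dist_eq] at hYi hSi ⊢
  rw [sub_zero, abs_of_nonneg (integral_nonneg fun ω => abs_nonneg _)] at hSi ⊢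
  have := integral_abs_sub_le_of_ae_le (I := I) (c := c) (hY i) (hS i) (hSY i)
  linarith [le_abs_self (∫ ω, Y i ω ∂μ - I)]

theorem tendsto_integral_min_atTop {f : Ω → ℝ} (hf : Integrable f μ) (hf0 : 0 ≤ᵐ[μ] f) :
    Tendsto (fun t : ℝ => ∫ ω, min (f ω) t ∂μ) atTop (𝓝 (∫ ω, f ω ∂μ)) := by
  refine tendsto_integral_filter_of_dominated_convergence f
    (Eventually.of_forall fun t => hf.1.inf aestronglyMeasurable_const) ?_ hf ?_
  · filter_upwards [eventually_ge_atTop 0] with t ht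
    filter_upwards [hf0] with ω hω
    rw [Real.norm_eq_abs, abs_of_nonneg (le_min hω ht)]
    exact min_le_left _ _
  · exact Eventually.of_forall fun ω => tendsto_const_nhds.congr'
      ((eventually_ge_atTop (f ω)).mono fun t ht => (min_eq_left ht).symm)

theorem integrable_staircase_comp [IsFiniteMeasure μ] {Z : Ω → ℝ} (hZ : AEMeasurable Z μ)
    (h : ℝ) (K : ℕ) : Integrable (fun ω => staircase h K (Z ω)) μ :=
  integrable_finsetSum _ fun _ _ => ((integrable_const 1).sub
    ((integrable_const 1).indicator₀ (hZ.nullMeasurable measurableSet_Iic))).const_mul h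

theorem integral_staircase_comp [IsProbabilityMeasure μ] {Z : Ω → ℝ} (hZ : AEMeasurable Z μ)
    (h : ℝ) (K : ℕ) :
    ∫ ω, staircase h K (Z ω) ∂μ = ∑ i ∈ Finset.Icc 1 K, h * (1 - μ.real {ω | Z ω ≤ i * h}) := by
  have hset : ∀ a : ℝ, NullMeasurableSet {ω | Z ω ≤ a} μ :=
    fun a => hZ.nullMeasurable measurableSet_Iic
  have hind : ∀ a : ℝ, Integrable ({ω | Z ω ≤ a}.indicator fun _ => (1 : ℝ)) μ :=
    fun a => (integrable_const 1).indicator₀ (hset a)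
  have hterm : ∀ i : ℕ, Integrable
      (fun ω => h * (1 - {ω | Z ω ≤ i * h}.indicator (fun _ => (1 : ℝ)) ω)) μ :=
    fun i => ((integrable_const 1).sub (hind _)).const_mul h
  change ∫ ω, ∑ i ∈ Finset.Icc 1 K,
    h * (1 - {ω | Z ω ≤ i * h}.indicator (fun _ => (1 : ℝ)) ω) ∂μ = _
  rw [integral_finsetSum _ fun i _ => hterm i]
  refine Finset.sum_congr rfl fun i _ => ?_
  rw [integral_const_mul, integral_sub (integrable_const 1) (hind _), integral_const,
    integral_indicator₀ (hset _), setIntegral_const]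
  simp

theorem exists_abs_integral_sub_integral_staircase_le [IsProbabilityMeasure μ] {Z : Ω → ℝ}
    (hZ : Integrable Z μ) (hZ0 : 0 ≤ᵐ[μ] Z) {h : ℝ} (hh : 0 < h) :
    ∃ K : ℕ, |∫ ω, Z ω ∂μ - ∫ ω, staircase h K (Z ω) ∂μ| ≤ 2 * h := by
  have htrunc := (tendsto_integral_min_atTop hZ hZ0).comp
    (tendsto_natCast_atTop_atTop.atTop_mul_const hh)
  obtain ⟨K, hK⟩ := (htrunc.eventually (eventually_ge_nhds (sub_lt_self _ hh))).exists
  refine ⟨K, ?_⟩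
  have hstep := integrable_staircase_comp hZ.1.aemeasurable h K
  have hupper : ∫ ω, staircase h K (Z ω) ∂μ ≤ ∫ ω, Z ω ∂μ :=
    integral_mono_ae hstep hZ (by
      filter_upwards [hZ0] with ω hω using (staircase_le_min hh.le hω).trans (min_le_left _ _))
  have hlower : ∫ ω, min (Z ω) (K * h) ∂μ - h ≤ ∫ ω, staircase h K (Z ω) ∂μ := by
    have hmin : Integrable (fun ω => min (Z ω) (K * h)) μ := hZ.inf (integrable_const _)
    have : ∫ ω, (min (Z ω) (K * h) - h) ∂μ ≤ ∫ ω, staircase h K (Z ω) ∂μ :=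
      integral_mono_ae (hmin.sub (integrable_const h)) hstep
        (Eventually.of_forall fun ω => min_sub_le_staircase hh.le)
    rwa [integral_sub hmin (integrable_const h), integral_const,
      probReal_univ, one_smul] at this
  rw [abs_le]
  simp only [Function.comp_apply] at hK
  constructor <;> linarith

theorem condExp_sum_mul_one_sub [IsFiniteMeasure μ] {m : MeasurableSpace Ω} (hm : m ≤ m0)
    {ι : Type*} {s : Finset ι} (a : ι → ℝ) {φ : ι → Ω → ℝ} (hφ : ∀ i ∈ s, Integrable (φ i) μ) :
    μ[fun ω => ∑ i ∈ s, a i * (1 - φ i ω) | m] =ᵐ[μ]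
      fun ω => ∑ i ∈ s, a i * (1 - μ[φ i | m] ω) := by
  have hterm : ∀ i ∈ s, μ[a i • ((fun _ => 1) - φ i) | m] =ᵐ[μ]
      a i • ((fun _ => 1) - μ[φ i | m]) := by
    intro i hi
    refine (condExp_smul (a i) _ m).trans ?_
    filter_upwards [condExp_sub (integrable_const (1 : ℝ)) (hφ i hi) m] with ω hω
    rw [condExp_const hm] at hω
    simp only [Pi.smul_apply, hω]
  have hsum := condExp_finsetSum
    (fun i hi => ((integrable_const (1 : ℝ)).sub (hφ i hi)).smul (a i)) m
  filter_upwards [hsum, (eventually_all_finset s).mpr hterm] with ω hsumω htermω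
  have hfun : (fun ω => ∑ i ∈ s, a i * (1 - φ i ω)) = ∑ i ∈ s, a i • ((fun _ => 1) - φ i) := by
    ext ω
    simp [Finset.sum_apply]
  rw [hfun, hsumω, Finset.sum_apply]
  exact Finset.sum_congr rfl htermω

theorem integral_abs_condExp_staircase_sub_le [IsFiniteMeasure μ] {m : MeasurableSpace Ω}
    (hm : m ≤ m0) {X : Ω → ℝ} (hX : AEMeasurable X μ) (F : ℝ → ℝ) (h : ℝ) (K : ℕ) :
    ∫ ω, |μ[fun ω => staircase h K (X ω) | m] ω - ∑ i ∈ Finset.Icc 1 K, h * (1 - F (i * h))| ∂μ ≤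
      ∑ i ∈ Finset.Icc 1 K,
        |h| * ∫ ω, |μ[{ω | X ω ≤ i * h}.indicator fun _ => (1 : ℝ) | m] ω - F (i * h)| ∂μ := by
  set G : ℕ → Ω → ℝ := fun i => μ[{ω | X ω ≤ i * h}.indicator fun _ => (1 : ℝ) | m]
  have hcond : μ[fun ω => staircase h K (X ω) | m] =ᵐ[μ]
      fun ω => ∑ i ∈ Finset.Icc 1 K, h * (1 - G i ω) :=
    condExp_sum_mul_one_sub hm (fun _ => h) fun i _ =>
      (integrable_const 1).indicator₀ (hX.nullMeasurable measurableSet_Iic)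
  have hGF : ∀ i, Integrable (fun ω => |G i ω - F (i * h)|) μ :=
    fun i => (integrable_condExp.sub (integrable_const _)).abs
  calc _ = ∫ ω, |∑ i ∈ Finset.Icc 1 K, h * (1 - G i ω) -
          ∑ i ∈ Finset.Icc 1 K, h * (1 - F (i * h))| ∂μ :=
        integral_congr_ae (hcond.mono fun ω hω => by simp only [hω])
    _ ≤ ∫ ω, ∑ i ∈ Finset.Icc 1 K, |h| * |G i ω - F (i * h)| ∂μ :=
        integral_mono ((integrable_finsetSum _ fun i _ =>
          ((integrable_const 1).sub integrable_condExp).const_mul h).sub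
            (integrable_const _)).abs
          (integrable_finsetSum _ fun i _ => (hGF i).const_mul _)
          fun ω => abs_sum_mul_one_sub_sub_le _ _ _ _
    _ = _ := by
        rw [integral_finsetSum _ fun i _ => (hGF i).const_mul _]
        simp_rw [integral_const_mul]
        rfl

theorem tendsto_integral_abs_condExp_staircase_sub [IsFiniteMeasure μ]
    {m : ℕ → MeasurableSpace Ω} (hm : ∀ n, m n ≤ m0) {X : ℕ → Ω → ℝ}
    (hX : ∀ n, AEMeasurable (X n) μ) {F : ℝ → ℝ} (hF : ∀ x, |F x| ≤ 1)
    (hcdf : ∀ x, TendstoInMeasure μ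
      (fun n => μ[{ω | X n ω ≤ x}.indicator fun _ => (1 : ℝ) | m n]) atTop (fun _ => F x))
    (h : ℝ) (K : ℕ) :
    Tendsto (fun n => ∫ ω, |μ[fun ω => staircase h K (X n ω) | m n] ω -
      ∑ i ∈ Finset.Icc 1 K, h * (1 - F (i * h))| ∂μ) atTop (𝓝 0) := by
  have hbdd : ∀ x n, ∀ᵐ ω ∂μ,
      |μ[{ω | X n ω ≤ x}.indicator fun _ => (1 : ℝ) | m n] ω - F x| ≤ 2 := by
    intro x n
    have hind : ∀ᵐ ω ∂μ, |{ω | X n ω ≤ x}.indicator (fun _ => (1 : ℝ)) ω| ≤ 1 :=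
      ae_of_all _ fun ω => by simp only [Set.indicator_apply]; split_ifs <;> norm_num
    filter_upwards [ae_bdd_abs_condExp_of_ae_bdd_abs (m := m n) hind] with ω hω
    linarith [abs_sub (μ[{ω | X n ω ≤ x}.indicator fun _ => (1 : ℝ) | m n] ω) (F x), hF x]
  have hconv : ∀ x, Tendsto (fun n => ∫ ω,
      |μ[{ω | X n ω ≤ x}.indicator fun _ => (1 : ℝ) | m n] ω - F x| ∂μ) atTop (𝓝 0) :=
    fun x => tendsto_integral_abs_sub_of_tendstoInMeasure (fun n => integrable_condExp.1)
      aestronglyMeasurable_const (hbdd x) (hcdf x)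
  refine squeeze_zero (fun n => integral_nonneg fun ω => abs_nonneg _)
    (fun n => integral_abs_condExp_staircase_sub_le (hm n) (hX n) F h K) ?_
  simpa using tendsto_finsetSum _ fun i _ => (hconv _).const_mul |h|

end MeasureTheory

/-- If `X_n ≥ 0`, `Z ≥ 0`, the conditional distribution functions of `X_n` given
`Y_n` (i.e. given sub-σ-algebras `m n`) converge in probability to that of `Z`,
and `E[X_n] → E[Z]`, then `E[X_n | Y_n] → E[Z]` in probability. -/
theorem stmt_16 {Ω : Type*} [inst : MeasurableSpace Ω] (μ : Measure Ω)
    [IsProbabilityMeasure μ]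
    {Ω' : Type*} [MeasurableSpace Ω'] (ν : Measure Ω') [IsProbabilityMeasure ν]
    (X : ℕ → Ω → ℝ) (Z : Ω' → ℝ)
    (m : ℕ → MeasurableSpace Ω) (hm : ∀ n, m n ≤ inst)
    (hX : ∀ n, 0 ≤ X n) (hZ : 0 ≤ Z)
    (hXint : ∀ n, Integrable (X n) μ) (hZint : Integrable Z ν)
    (hcdf : ∀ x : ℝ,
      TendstoInMeasure μ
        (fun n => μ[Set.indicator {ω | X n ω ≤ x} (fun _ => (1:ℝ)) | m n])
        atTop
        (fun _ => (ν {ω' | Z ω' ≤ x}).toReal))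
    (hmean : Tendsto (fun n => ∫ ω, X n ω ∂μ) atTop (nhds (∫ ω', Z ω' ∂ν))) :
    TendstoInMeasure μ (fun n => μ[X n | m n]) atTop
      (fun _ => ∫ ω', Z ω' ∂ν) := by
  refine tendstoInMeasure_of_tendsto_integral_abs_sub (fun n => integrable_condExp)
    (integrable_const _) ?_
  refine tendsto_integral_abs_sub_of_forall_exists_le (fun n => integrable_condExp)
    (by simpa only [integral_condExp (hm _)] using hmean) fun η hη => ?_
  obtain ⟨K, hK⟩ := exists_abs_integral_sub_integral_staircase_le hZint (ae_of_all _ hZ)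
    (half_pos hη)
  refine ⟨fun n => μ[fun ω => staircase (η / 2) K (X n ω) | m n],
    ∑ i ∈ Finset.Icc 1 K, η / 2 * (1 - ν.real {ω' | Z ω' ≤ i * (η / 2)}),
    fun n => integrable_condExp, fun n => ?_, ?_, ?_⟩
  · exact condExp_mono (integrable_staircase_comp (hXint n).1.aemeasurable _ _) (hXint n)
      (ae_of_all _ fun ω => (staircase_le_min (half_pos hη).le (hX n ω)).trans (min_le_left _ _))
  · exact tendsto_integral_abs_condExp_staircase_sub hm (fun n => (hXint n).1.aemeasurable)
      (fun x => (abs_of_nonneg measureReal_nonneg).trans_le measureReal_le_one) hcdf _ _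
  · rw [← integral_staircase_comp hZint.1.aemeasurable]
    linarith
end
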